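/- Let n ≥ 4 and let S ⊆ {4,…,n}. Then P^S is the strictly-unique output configuration for A^S: for every ℓ with 1 ≤ ℓ ≤ n and every q with 1 ≤ q ≤ n−ℓ+1 and q ≠ p_ℓ, one has W(A^S, p_ℓ, ℓ) > W(A^S, q, ℓ), where P^S = (p_1,…,p_n). -/

import Mathlib

/-- Window sum: `W A p ℓ = a_p + a_{p+1} + ⋯ + a_{p+ℓ-1}` for a 1-indexed sequence `A`. -/
noncomputable def W (A : ℕ → ℝ) (p ℓ : ℕ) : ℝ := ∑ i ∈ Finset.Ico p (p + ℓ), A i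

/-- The sequence `A^S`: `a_1 = 0`, `a_2 = 2`, `a_3 = 4n`, and for `4 ≤ i ≤ n`,
`a_i = 1` if `i ∈ S` and `a_i = 3` otherwise. -/
noncomputable def AS (n : ℕ) (S : Finset ℕ) (i : ℕ) : ℝ :=
  if i = 1 then 0 else if i = 2 then 2 else if i = 3 then 4 * n
  else if i ∈ S then 1 else 3

/-- The configuration `P^S`: `p_j = 2` if `j ≤ n-2` and `j+2 ∈ S`, `p_j = 3` if
`j ≤ n-2` and `j+2 ∉ S`, and `p_j = n - j + 1` for `j ≥ n-1`. -/
def PS (n : ℕ) (S : Finset ℕ) (j : ℕ) : ℕ :=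
  if j ≤ n - 2 then (if j + 2 ∈ S then 2 else 3) else n - j + 1

lemma AS_nonneg (n : ℕ) (S : Finset ℕ) (i : ℕ) : 0 ≤ AS n S i := by
  unfold AS; split_ifs <;> positivity

lemma AS_one_le (n : ℕ) (S : Finset ℕ) (i : ℕ) (hn : 1 ≤ n) (h : i ≠ 1) :
    1 ≤ AS n S i := by
  have : (1 : ℝ) ≤ n := by exact_mod_cast hn
  unfold AS; split_ifs <;> first | omega | linarith

lemma AS_le_three (n : ℕ) (S : Finset ℕ) (i : ℕ) (h : i ≠ 3) : AS n S i ≤ 3 := by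
  unfold AS; split_ifs <;> first | omega | norm_num

lemma AS_three (n : ℕ) (S : Finset ℕ) : AS n S 3 = 4 * n := by simp [AS]

lemma AS_two (n : ℕ) (S : Finset ℕ) : AS n S 2 = 2 := by simp [AS]

lemma AS_one (n : ℕ) (S : Finset ℕ) : AS n S 1 = 0 := by simp [AS]

lemma AS_of_mem (n : ℕ) (S : Finset ℕ) (i : ℕ) (h4 : 4 ≤ i) (h : i ∈ S) :
    AS n S i = 1 := by
  unfold AS; split_ifs <;> first | omega | rfl

lemma AS_of_not_mem (n : ℕ) (S : Finset ℕ) (i : ℕ) (h4 : 4 ≤ i) (h : i ∉ S) :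
    AS n S i = 3 := by
  unfold AS; split_ifs <;> first | omega | exact absurd ‹_› h | rfl

lemma W_top (A : ℕ → ℝ) (p ℓ : ℕ) : W A p (ℓ + 1) = W A p ℓ + A (p + ℓ) := by
  unfold W
  rw [show p + (ℓ + 1) = (p + ℓ) + 1 from rfl,
    Finset.sum_Ico_succ_top (Nat.le_add_right p ℓ)]

lemma W_bot (A : ℕ → ℝ) (p ℓ : ℕ) : W A p (ℓ + 1) = A p + W A (p + 1) ℓ := by
  unfold W
  rw [Finset.sum_eq_sum_Ico_succ_bot (by omega : p < p + (ℓ + 1)),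
    show p + (ℓ + 1) = (p + 1) + ℓ by ring]

lemma W2_sub_W1 (A : ℕ → ℝ) (m : ℕ) :
    W A 2 (m + 1) - W A 1 (m + 1) = A (m + 2) - A 1 := by
  rw [W_bot A 1 m, W_top A 2 m, show 2 + m = m + 2 by ring]; ring

lemma W2_sub_W3 (A : ℕ → ℝ) (m : ℕ) :
    W A 2 (m + 1) - W A 3 (m + 1) = A 2 - A (m + 3) := by
  rw [W_bot A 2 m, W_top A 3 m, show 3 + m = m + 3 by ring]; ring

lemma W3_sub_W1 (A : ℕ → ℝ) (m : ℕ) :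
    W A 3 (m + 1) - W A 1 (m + 1) = A (m + 2) + A (m + 3) - A 1 - A 2 := by
  have h1 := W2_sub_W1 A m
  have h2 := W2_sub_W3 A m
  linarith

lemma W_ge_4n (n : ℕ) (S : Finset ℕ) (p ℓ : ℕ) (h3 : 3 ∈ Finset.Ico p (p + ℓ)) :
    4 * (n : ℝ) ≤ W (AS n S) p ℓ := by
  calc 4 * (n : ℝ) = AS n S 3 := (AS_three n S).symm
    _ ≤ W (AS n S) p ℓ :=
      Finset.single_le_sum (fun i _ => AS_nonneg n S i) h3

lemma W_le_3l (n : ℕ) (S : Finset ℕ) (q ℓ : ℕ) (hq : 4 ≤ q) :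
    W (AS n S) q ℓ ≤ 3 * ℓ := by
  calc W (AS n S) q ℓ ≤ ∑ _i ∈ Finset.Ico q (q + ℓ), (3 : ℝ) := by
        apply Finset.sum_le_sum
        intro i hi
        have : 4 ≤ i := le_trans hq (Finset.mem_Ico.mp hi).1
        exact AS_le_three n S i (by omega)
    _ = 3 * ℓ := by
        rw [Finset.sum_const, Nat.card_Ico, Nat.add_sub_cancel_left, nsmul_eq_mul]
        ring

/-- For every `S ⊆ {4,…,n}`, `P^S` is the strictly-unique output configuration
for `A^S`. -/
theorem PS_strictly_unique_for_AS
    (n : ℕ) (hn : 4 ≤ n) (S : Finset ℕ) (hS : S ⊆ Finset.Icc 4 n) :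
    ∀ ℓ, 1 ≤ ℓ → ℓ ≤ n → ∀ q, 1 ≤ q → q ≤ n - ℓ + 1 → q ≠ PS n S ℓ →
      W (AS n S) (PS n S ℓ) ℓ > W (AS n S) q ℓ := by
  intro ℓ hℓ1 hℓn q hq1 hqn hqp
  have hnR : (4 : ℝ) ≤ n := by exact_mod_cast hn
  obtain ⟨m, rfl⟩ : ∃ m, ℓ = m + 1 := ⟨ℓ - 1, by omega⟩
  by_cases hc : m + 1 ≤ n - 2
  · have hps : PS n S (m + 1) = if m + 3 ∈ S then 2 else 3 := by
      simp only [PS, if_pos hc]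
    rw [hps] at hqp ⊢
    by_cases hmem : m + 3 ∈ S
    · -- p = 2
      have hm1 : 1 ≤ m := by
        have := hS hmem; rw [Finset.mem_Icc] at this; omega
      rw [if_pos hmem] at hqp ⊢
      have hA3 : AS n S (m + 3) = 1 := AS_of_mem n S _ (by omega) hmem
      rcases (by omega : q = 1 ∨ q = 3 ∨ 4 ≤ q) with h | h | h
      · subst h
        have := W2_sub_W1 (AS n S) m
        have h2 := AS_one_le n S (m + 2) (by omega) (by omega)
        rw [AS_one] at this
        linarith
      · subst h
        have := W2_sub_W3 (AS n S) m
        rw [AS_two, hA3] at this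
        linarith
      · have h1 := W_le_3l n S q (m + 1) h
        have h2 := W_ge_4n n S 2 (m + 1) (by rw [Finset.mem_Ico]; omega)
        have h3 : ((m : ℝ) + 1) ≤ n := by exact_mod_cast (by omega : m + 1 ≤ n)
        push_cast at h1
        linarith
    · -- p = 3
      rw [if_neg hmem] at hqp ⊢
      have hA3 : 2 < AS n S (m + 3) := by
        rcases Nat.eq_zero_or_pos m with hm | hm
        · subst hm; rw [show (0:ℕ) + 3 = 3 from rfl, AS_three]; linarith
        · rw [AS_of_not_mem n S _ (by omega) hmem]; norm_num
      rcases (by omega : q = 1 ∨ q = 2 ∨ 4 ≤ q) with h | h | h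
      · subst h
        have := W3_sub_W1 (AS n S) m
        have h2 := AS_one_le n S (m + 2) (by omega) (by omega)
        rw [AS_one, AS_two] at this
        linarith
      · subst h
        have := W2_sub_W3 (AS n S) m
        rw [AS_two] at this
        linarith
      · have h1 := W_le_3l n S q (m + 1) h
        have h2 := W_ge_4n n S 3 (m + 1) (by rw [Finset.mem_Ico]; omega)
        have h3 : ((m : ℝ) + 1) ≤ n := by exact_mod_cast (by omega : m + 1 ≤ n)
        push_cast at h1
        linarith
  · have hps : PS n S (m + 1) = n - (m + 1) + 1 := by
      simp only [PS, if_neg hc]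
    rw [hps] at hqp ⊢
    rcases (by omega : m + 1 = n ∨ m + 1 = n - 1) with h | h
    · omega
    · have hq : q = 1 := by omega
      have hp : n - (m + 1) + 1 = 2 := by omega
      subst hq
      rw [hp]
      have := W2_sub_W1 (AS n S) m
      have h2 := AS_one_le n S (m + 2) (by omega) (by omega)
      rw [AS_one] at this
      linarith
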